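/- Let ‖·‖ be a norm on c₀₀ satisfying equation (2.2). Let 1 ≤ p < ∞, k, m, ℓ ∈ ℕ and let x ∈ c₀₀ be an ℓ_p^k-average with constant 2. Then: (a) |||x|||_m ≤ 4m^{−1/p} + k^{−1/p}; (b) ‖x‖_ℓ ≤ (1/f(ℓ))·[C_p + 2ℓ·k^{−1/p}], where C_p = 4(1 − 2^{−1/p})^{−1}. -/

import Mathlib

open Finset

/-- `c₀₀`: finitely supported functions `ℕ → ℝ`. -/
abbrev C00 := ℕ →₀ ℝ

/-- `f(t) = log₂(1+t)`. -/
noncomputable def f (t : ℝ) : ℝ := Real.logb 2 (1 + t)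

/-- `E < F` for finite sets: every element of `E` is less than every element of `F`. -/
def FinsetLT (E F : Finset ℕ) : Prop := ∀ i ∈ E, ∀ j ∈ F, i < j

/-- `Ex`: coordinatewise product of `x` with the indicator of `E`. -/
noncomputable def restr (E : Finset ℕ) (x : C00) : C00 := x.filter (· ∈ E)

/-- `N` is a norm on `c₀₀`. -/
def IsNorm (N : C00 → ℝ) : Prop :=
  (∀ x y, N (x + y) ≤ N x + N y) ∧
  (∀ (c : ℝ) (x), N (c • x) = |c| * N x) ∧
  (∀ x, x ≠ 0 → 0 < N x)

/-- the sup norm `‖x‖_∞`. -/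
noncomputable def supNorm (x : C00) : ℝ := ⨆ i, |x i|

/-- `((m_i, E_i))_{i=1}^ℓ` is admissible: `2 ≤ m₁ < ⋯ < m_ℓ`, `E₁ < ⋯ < E_ℓ`,
and `f(m_{i+1}) > ∑_{j=1}^i |E_j|`. -/
def Admissible (ℓ : ℕ) (m : Fin ℓ → ℕ) (E : Fin ℓ → Finset ℕ) : Prop :=
  (∀ i, 2 ≤ m i) ∧ StrictMono m ∧
  (∀ i j : Fin ℓ, i < j → FinsetLT (E i) (E j)) ∧
  ∀ i j : Fin ℓ, (i : ℕ) + 1 = (j : ℕ) →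
    (∑ t ∈ Finset.Iic i, ((E t).card : ℝ)) < f (m j)

/-- `|||x|||_m = sup{(1/m) ∑_{i=1}^m ‖F_i x‖ : F₁ < ⋯ < F_m}`. -/
noncomputable def tnorm (N : C00 → ℝ) (m : ℕ) (x : C00) : ℝ :=
  sSup {r | ∃ F : Fin m → Finset ℕ,
    (∀ i j : Fin m, i < j → FinsetLT (F i) (F j)) ∧
    r = (1 / (m : ℝ)) * ∑ i, N (restr (F i) x)}

/-- `‖x‖_ℓ = sup{(1/f(ℓ)) ∑_{i=1}^ℓ |||E_i x|||_{m_i} : ((m_i,E_i))_{i=1}^ℓ admissible}`. -/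
noncomputable def normL (N : C00 → ℝ) (ℓ : ℕ) (x : C00) : ℝ :=
  sSup {r | ∃ (m : Fin ℓ → ℕ) (E : Fin ℓ → Finset ℕ), Admissible ℓ m E ∧
    r = (1 / f ℓ) * ∑ i, tnorm N (m i) (restr (E i) x)}

/-- `‖x‖_{(ℓ,m₀)}`: as `‖x‖_ℓ` but restricted to admissible families with `m₁ ≥ m₀`. -/
noncomputable def normLM (N : C00 → ℝ) (ℓ m₀ : ℕ) (x : C00) : ℝ :=
  sSup {r | ∃ (m : Fin ℓ → ℕ) (E : Fin ℓ → Finset ℕ), Admissible ℓ m E ∧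
    (∀ i, m₀ ≤ m i) ∧
    r = (1 / f ℓ) * ∑ i, tnorm N (m i) (restr (E i) x)}

/-- Equation (2.2):
`‖x‖ = max{‖x‖_∞, sup{(1/f(ℓ)) ∑ |||E_i x|||_{m_i} : ℓ ∈ ℕ, ((m_i,E_i)) admissible}}`. -/
def Eq22 (N : C00 → ℝ) : Prop :=
  ∀ x, N x = max (supNorm x)
    (sSup {r | ∃ (ℓ : ℕ) (m : Fin ℓ → ℕ) (E : Fin ℓ → Finset ℕ), Admissible ℓ m E ∧
      r = (1 / f ℓ) * ∑ i, tnorm N (m i) (restr (E i) x)})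

/-- A finite block basis: nonzero vectors with successive supports. -/
def BlockSeqFin {n : ℕ} (y : Fin n → C00) : Prop :=
  (∀ i, y i ≠ 0) ∧ ∀ i j : Fin n, i < j → FinsetLT (y i).support (y j).support

/-- An infinite block basis of `(e_i)`: nonzero vectors with successive supports. -/
def BlockSeqInf (y : ℕ → C00) : Prop :=
  (∀ i, y i ≠ 0) ∧ ∀ i, FinsetLT (y i).support (y (i + 1)).support

/-- `(z_k)_{k=1}^n` is a (finite) block basis of `(y_i)`. -/
def FiniteBlockOf {n : ℕ} (z : Fin n → C00) (y : ℕ → C00) : Prop :=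
  ∃ (B : Fin n → Finset ℕ) (c : ℕ → ℝ),
    (∀ k k' : Fin n, k < k' → FinsetLT (B k) (B k')) ∧
    (∀ k, z k = ∑ i ∈ B k, c i • y i) ∧ ∀ k, z k ≠ 0

/-- `x` is an `ℓ_p^k`-average with constant `C`. -/
def IsLpAverage (N : C00 → ℝ) (p : ℝ) (k : ℕ) (C : ℝ) (x : C00) : Prop :=
  ∃ y : Fin k → C00, BlockSeqFin y ∧ (∀ i, N (y i) = 1) ∧
    (∀ a : Fin k → ℝ,
      C⁻¹ * (∑ i, |a i| ^ p) ^ (1 / p) ≤ N (∑ i, a i • y i) ∧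
      N (∑ i, a i • y i) ≤ C * (∑ i, |a i| ^ p) ^ (1 / p)) ∧
    x = ((k : ℝ) ^ (-(1 / p))) • ∑ i, y i

/-- `C_p = 4(1 - 2^{-1/p})⁻¹`. -/
noncomputable def Cp (p : ℝ) : ℝ := 4 * (1 - (2 : ℝ) ^ (-(1 / p)))⁻¹

/-!
Restricting to a set of coordinates does not increase a norm satisfying (2.2): intersecting an
admissible family with the set keeps it admissible, and the sup norm can only drop.

Fix `F₁ < ⋯ < F_m` and let `M_j` be the set of blocks `y_i` whose support meets `F_j`. Without
its largest element, `M_j` lies strictly below every `M_{j'}` with `j' > j`, so these sets `A_j`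
are pairwise disjoint and `∑ |A_j| ≤ k`. The upper `ℓ_p` estimate bounds `‖F_j x‖` by
`k^{-1/p} (2 |A_j|^{1/p} + 1)`, and concavity of `t ↦ t^{1/p}` turns the average over `j` into
`2 m^{-1/p} + k^{-1/p}`.

For `‖x‖_ℓ` only the nonempty `E_i` contribute. If `r` nonempty sets precede `E_i`, admissibility
gives `log₂(1 + m_i) > r`, so `m_i ≥ 2^r`, and `∑ m_i^{-1/p}` is dominated by the geometric
series with ratio `2^{-1/p}`.
-/

section Restriction

lemma restr_apply (E : Finset ℕ) (x : C00) (i : ℕ) :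
    restr E x i = if i ∈ E then x i else 0 := rfl

lemma support_restr (E : Finset ℕ) (x : C00) :
    (restr E x).support = {i ∈ x.support | i ∈ E} := rfl

lemma restr_restr (E F : Finset ℕ) (x : C00) : restr E (restr F x) = restr (E ∩ F) x := by
  ext i
  simp only [restr_apply, mem_inter]
  split_ifs <;> tauto

lemma restr_zero (E : Finset ℕ) : restr E 0 = 0 := Finsupp.filter_zero _

lemma restr_empty (x : C00) : restr ∅ x = 0 := by
  ext i
  simp [restr_apply]

lemma restr_smul (E : Finset ℕ) (c : ℝ) (x : C00) : restr E (c • x) = c • restr E x :=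
  Finsupp.filter_smul

lemma restr_sum {ι : Type*} (E : Finset ℕ) (s : Finset ι) (g : ι → C00) :
    restr E (∑ a ∈ s, g a) = ∑ a ∈ s, restr E (g a) :=
  Finsupp.filter_sum _ _

lemma restr_eq_self {E : Finset ℕ} {x : C00} (h : x.support ⊆ E) : restr E x = x :=
  (Finsupp.filter_eq_self_iff _ _).2 fun _ hi => h (Finsupp.mem_support_iff.2 hi)

lemma restr_eq_zero_of_disjoint {E : Finset ℕ} {x : C00} (h : Disjoint x.support E) :
    restr E x = 0 :=
  (Finsupp.filter_eq_zero_iff _ _).2 fun _ hi =>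
    Finsupp.notMem_support_iff.1 (disjoint_right.1 h hi)

lemma supNorm_restr_le (E : Finset ℕ) (x : C00) : supNorm (restr E x) ≤ supNorm x := by
  have hbdd : BddAbove (Set.range fun i => |x i|) :=
    (Set.range_comp abs x ▸ x.finite_range.image abs).bddAbove
  refine ciSup_le fun i => ?_
  refine le_trans ?_ (le_ciSup hbdd i)
  rw [restr_apply]
  split_ifs <;> simp

end Restriction

lemma FinsetLT.mono {A B A' B' : Finset ℕ} (h : FinsetLT A B) (hA : A' ⊆ A) (hB : B' ⊆ B) :
    FinsetLT A' B' := fun i hi j hj => h i (hA hi) j (hB hj)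

lemma FinsetLT.disjoint {A B : Finset ℕ} (h : FinsetLT A B) : Disjoint A B :=
  disjoint_left.2 fun i hiA hiB => lt_irrefl i (h i hiA i hiB)

section Norm

variable {N : C00 → ℝ}

lemma IsNorm.map_zero (hN : IsNorm N) : N 0 = 0 := by
  simpa using hN.2.1 0 0

lemma IsNorm.nonneg (hN : IsNorm N) (z : C00) : 0 ≤ N z := by
  rcases eq_or_ne z 0 with rfl | hz
  · exact hN.map_zero.ge
  · exact (hN.2.2 z hz).le

lemma IsNorm.sum_le (hN : IsNorm N) {ι : Type*} (s : Finset ι) (g : ι → C00) :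
    N (∑ a ∈ s, g a) ≤ ∑ a ∈ s, N (g a) :=
  le_sum_of_subadditive N hN.map_zero.le hN.1 s g

lemma IsNorm.le_sum_support (hN : IsNorm N) (z : C00) :
    N z ≤ ∑ i ∈ z.support, |z i| * N (Finsupp.single i 1) := by
  conv_lhs => rw [← Finsupp.sum_single z]
  refine (hN.sum_le _ _).trans_eq (sum_congr rfl fun i _ => ?_)
  rw [← Finsupp.smul_single_one, hN.2.1]

lemma IsNorm.restr_le_sum (hN : IsNorm N) (E : Finset ℕ) (z : C00) :
    N (restr E z) ≤ ∑ i ∈ z.support with i ∈ E, |z i| * N (Finsupp.single i 1) := by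
  refine (hN.le_sum_support _).trans_eq (sum_congr (support_restr E z) fun i hi => ?_)
  rw [restr_apply, if_pos (mem_filter.1 hi).2]

end Norm

section Tnorm

variable {N : C00 → ℝ}

lemma tnorm_nonneg (hN : IsNorm N) (m : ℕ) (z : C00) : 0 ≤ tnorm N m z := by
  refine Real.sSup_nonneg fun _ ⟨F, _, hr⟩ => hr ▸ ?_
  exact mul_nonneg (by positivity) (sum_nonneg fun i _ => hN.nonneg _)

lemma tnorm_le {m : ℕ} {z : C00} {B : ℝ} (hB : 0 ≤ B)
    (h : ∀ F : Fin m → Finset ℕ, (∀ i j : Fin m, i < j → FinsetLT (F i) (F j)) →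
      (1 / (m : ℝ)) * ∑ i, N (restr (F i) z) ≤ B) : tnorm N m z ≤ B :=
  Real.sSup_le (fun _ ⟨F, hF, hr⟩ => hr ▸ h F hF) hB

lemma tnorm_zero (hN : IsNorm N) (m : ℕ) : tnorm N m 0 = 0 :=
  le_antisymm (tnorm_le le_rfl fun F _ => by simp [restr_zero, hN.map_zero])
    (tnorm_nonneg hN m 0)

lemma tnorm_restr_le_sum (hN : IsNorm N) (m : ℕ) (E : Finset ℕ) (z : C00) :
    tnorm N m (restr E z) ≤ ∑ i ∈ z.support with i ∈ E, |z i| * N (Finsupp.single i 1) := by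
  set B := ∑ i ∈ z.support with i ∈ E, |z i| * N (Finsupp.single i 1)
  have hB : 0 ≤ B := sum_nonneg fun i _ => mul_nonneg (abs_nonneg _) (hN.nonneg _)
  refine tnorm_le hB fun F _ => ?_
  have hterm : ∀ j, N (restr (F j) (restr E z)) ≤ B := fun j => by
    rw [restr_restr]
    refine (hN.restr_le_sum _ z).trans (sum_le_sum_of_subset_of_nonneg ?_ ?_)
    · exact fun i hi => mem_filter.2 ⟨(mem_filter.1 hi).1, (mem_inter.1 (mem_filter.1 hi).2).2⟩
    · exact fun i _ _ => mul_nonneg (abs_nonneg _) (hN.nonneg _)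
  calc (1 / (m : ℝ)) * ∑ j, N (restr (F j) (restr E z)) ≤ (1 / (m : ℝ)) * (m * B) := by
        gcongr
        simpa using sum_le_sum fun j (_ : j ∈ univ) => hterm j
    _ ≤ B := by
        rcases Nat.eq_zero_or_pos m with rfl | hm
        · simpa using hB
        · rw [one_div, inv_mul_cancel_left₀ (by positivity)]

end Tnorm

lemma f_natCast_nonneg (ℓ : ℕ) : 0 ≤ f ℓ :=
  Real.logb_nonneg one_lt_two (by simp)

lemma one_div_f_natCast_le_one (ℓ : ℕ) : 1 / f ℓ ≤ 1 := by
  rcases Nat.eq_zero_or_pos ℓ with rfl | hℓ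
  · simp [f]
  have h2 : (2 : ℝ) ≤ 1 + ℓ := by
    have : (1 : ℝ) ≤ ℓ := by exact_mod_cast hℓ
    linarith
  have hf : 1 ≤ f ℓ := by
    simpa [f, Real.logb_self_eq_one] using Real.logb_le_logb_of_le (b := 2) one_lt_two two_pos h2
  exact (div_le_one (by linarith)).2 hf

lemma sum_pow_le_of_injOn {ι : Type*} {γ : ℝ} (h0 : 0 ≤ γ) (h1 : γ < 1) {s : Finset ι}
    {c : ι → ℕ} (hc : Set.InjOn c s) : ∑ i ∈ s, γ ^ c i ≤ (1 - γ)⁻¹ := by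
  rw [← sum_image hc, ← tsum_geometric_of_lt_one h0 h1]
  exact (summable_geometric_of_lt_one h0 h1).sum_le_tsum _ fun i _ => pow_nonneg h0 i

namespace Admissible

variable {ℓ : ℕ} {m : Fin ℓ → ℕ} {E : Fin ℓ → Finset ℕ}

lemma pairwise_disjoint (h : Admissible ℓ m E) : Pairwise (Function.onFun Disjoint E) := by
  intro i j hij
  rcases lt_or_gt_of_ne hij with hlt | hlt
  · exact (h.2.2.1 i j hlt).disjoint
  · exact (h.2.2.1 j i hlt).disjoint.symm

lemma inter (h : Admissible ℓ m E) (G : Finset ℕ) : Admissible ℓ m fun i => E i ∩ G := by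
  obtain ⟨h2, hmono, hlt, hcard⟩ := h
  refine ⟨h2, hmono, fun i j hij => (hlt i j hij).mono inter_subset_left inter_subset_left,
    fun i j hij => lt_of_le_of_lt ?_ (hcard i j hij)⟩
  gcongr with t
  exact inter_subset_left

lemma two_pow_card_lt_le (h : Admissible ℓ m E) {S : Finset (Fin ℓ)}
    (hS : ∀ i ∈ S, (E i).Nonempty) (i : Fin ℓ) : 2 ^ #{j ∈ S | j < i} ≤ m i := by
  set c := #{j ∈ S | j < i}
  rcases Nat.eq_zero_or_pos c with hc | hc
  · rw [hc, pow_zero]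
    exact le_trans one_le_two (h.1 i)
  obtain ⟨j, hj⟩ := card_pos.1 hc
  have hji : (j : ℕ) < i := (mem_filter.1 hj).2
  obtain ⟨i', hi'⟩ : ∃ i' : Fin ℓ, (i' : ℕ) + 1 = i := ⟨⟨i - 1, by omega⟩, by simp; omega⟩
  have hcard : c ≤ ∑ t ∈ Iic i', (E t).card :=
    calc c = ∑ _t ∈ {j ∈ S | j < i}, 1 := card_eq_sum_ones _
      _ ≤ ∑ t ∈ {j ∈ S | j < i}, (E t).card :=
          sum_le_sum fun t ht => card_pos.2 (hS t (mem_filter.1 ht).1)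
      _ ≤ ∑ t ∈ Iic i', (E t).card := sum_le_sum_of_subset fun t ht => by
          have : (t : ℕ) < i := (mem_filter.1 ht).2
          simp only [mem_Iic, Fin.le_def]
          omega
  have hlt : (c : ℝ) < Real.logb 2 (1 + m i) :=
    lt_of_le_of_lt (by exact_mod_cast hcard) (h.2.2.2 i' i hi')
  rw [Real.lt_logb_iff_rpow_lt one_lt_two (by positivity), Real.rpow_natCast] at hlt
  have : 2 ^ c < 1 + m i := by exact_mod_cast hlt
  omega

lemma sum_rpow_neg_le (h : Admissible ℓ m E) {q : ℝ} (hq : 0 < q) {S : Finset (Fin ℓ)}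
    (hS : ∀ i ∈ S, (E i).Nonempty) :
    ∑ i ∈ S, (m i : ℝ) ^ (-q) ≤ (1 - (2 : ℝ) ^ (-q))⁻¹ := by
  set c : Fin ℓ → ℕ := fun i => #{j ∈ S | j < i}
  have hc : StrictMonoOn c S := fun i hi i' _ hii' => by
    refine card_lt_card ((ssubset_iff_of_subset fun j hj => ?_).2 ⟨i, ?_, ?_⟩)
    · exact mem_filter.2 ⟨(mem_filter.1 hj).1, (mem_filter.1 hj).2.trans hii'⟩
    · exact mem_filter.2 ⟨hi, hii'⟩
    · simp
  have hterm : ∀ i ∈ S, (m i : ℝ) ^ (-q) ≤ ((2 : ℝ) ^ (-q)) ^ c i := fun i _ => by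
    rw [Real.rpow_pow_comm zero_le_two]
    exact Real.rpow_le_rpow_of_nonpos (by positivity)
      (by exact_mod_cast h.two_pow_card_lt_le hS i) (by linarith)
  exact (sum_le_sum hterm).trans (sum_pow_le_of_injOn (by positivity)
    (Real.rpow_lt_one_of_one_lt_of_neg one_lt_two (by linarith)) hc.injOn)

end Admissible

section Eq22

variable {N : C00 → ℝ}

lemma Admissible.sum_tnorm_restr_le (hN : IsNorm N) {ℓ : ℕ} {m : Fin ℓ → ℕ}
    {E : Fin ℓ → Finset ℕ} (h : Admissible ℓ m E) (z : C00) :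
    ∑ i, tnorm N (m i) (restr (E i) z) ≤
      ∑ j ∈ z.support, |z j| * N (Finsupp.single j 1) := by
  set g : ℕ → ℝ := fun j => |z j| * N (Finsupp.single j 1)
  have hg : ∀ j, 0 ≤ g j := fun j => mul_nonneg (abs_nonneg _) (hN.nonneg _)
  have hdisj : ((univ : Finset (Fin ℓ)) : Set (Fin ℓ)).PairwiseDisjoint
      fun i => {j ∈ z.support | j ∈ E i} := fun i _ i' _ hii' =>
    disjoint_left.2 fun j hj hj' =>
      disjoint_left.1 (h.pairwise_disjoint hii') (mem_filter.1 hj).2 (mem_filter.1 hj').2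
  calc ∑ i, tnorm N (m i) (restr (E i) z) ≤ ∑ i, ∑ j ∈ z.support with j ∈ E i, g j :=
        sum_le_sum fun i _ => tnorm_restr_le_sum hN _ _ _
    _ = ∑ j ∈ univ.biUnion fun i => {j ∈ z.support | j ∈ E i}, g j := (sum_biUnion hdisj).symm
    _ ≤ ∑ j ∈ z.support, g j :=
        sum_le_sum_of_subset_of_nonneg (biUnion_subset.2 fun i _ => filter_subset _ _)
          fun j _ _ => hg j

lemma Eq22.le_of_admissible (hN : IsNorm N) (hEq : Eq22 N) {ℓ : ℕ} {m : Fin ℓ → ℕ}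
    {E : Fin ℓ → Finset ℕ} (h : Admissible ℓ m E) (z : C00) :
    (1 / f ℓ) * ∑ i, tnorm N (m i) (restr (E i) z) ≤ N z := by
  have hbdd : BddAbove {r | ∃ (ℓ : ℕ) (m : Fin ℓ → ℕ) (E : Fin ℓ → Finset ℕ),
      Admissible ℓ m E ∧ r = (1 / f ℓ) * ∑ i, tnorm N (m i) (restr (E i) z)} := by
    refine ⟨∑ j ∈ z.support, |z j| * N (Finsupp.single j 1), ?_⟩
    rintro _ ⟨ℓ', m', E', h', rfl⟩
    have hS : 0 ≤ ∑ i, tnorm N (m' i) (restr (E' i) z) :=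
      sum_nonneg fun i _ => tnorm_nonneg hN _ _
    calc (1 / f ℓ') * ∑ i, tnorm N (m' i) (restr (E' i) z)
        ≤ 1 * ∑ i, tnorm N (m' i) (restr (E' i) z) := by
          gcongr
          exact one_div_f_natCast_le_one ℓ'
      _ ≤ _ := (one_mul _).trans_le (h'.sum_tnorm_restr_le hN z)
  rw [hEq z]
  exact (le_csSup hbdd ⟨ℓ, m, E, h, rfl⟩).trans (le_max_right _ _)

lemma Eq22.norm_restr_le (hN : IsNorm N) (hEq : Eq22 N) (G : Finset ℕ) (z : C00) :
    N (restr G z) ≤ N z := by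
  have hsup : supNorm z ≤ N z := by
    rw [hEq z]
    exact le_max_left _ _
  rw [hEq (restr G z)]
  refine max_le ((supNorm_restr_le G z).trans hsup) (Real.sSup_le ?_ (hN.nonneg z))
  rintro _ ⟨ℓ, m, E, h, rfl⟩
  simp_rw [restr_restr]
  exact hEq.le_of_admissible hN (h.inter G) z

end Eq22

section Blocks

def nonMaximal {α : Type*} [LinearOrder α] (s : Finset α) : Finset α := {i ∈ s | ∃ a ∈ s, i < a}

lemma nonMaximal_subset {α : Type*} [LinearOrder α] (s : Finset α) : nonMaximal s ⊆ s :=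
  filter_subset _ _

lemma card_sdiff_nonMaximal_le_one {α : Type*} [LinearOrder α] (s : Finset α) :
    (s \ nonMaximal s).card ≤ 1 := by
  refine card_le_one.2 fun a ha b hb => ?_
  simp only [nonMaximal, mem_sdiff, mem_filter, not_and, not_exists, not_lt] at ha hb
  exact le_antisymm (hb.2 hb.1 a ha.1) (ha.2 ha.1 b hb.1)

lemma disjoint_nonMaximal_of_forall_le {α : Type*} [LinearOrder α] {s t : Finset α}
    (h : ∀ a ∈ s, ∀ b ∈ t, a ≤ b) : Disjoint (nonMaximal s) t :=
  disjoint_left.2 fun i hi hit => by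
    obtain ⟨-, a, has, hia⟩ := mem_filter.1 hi
    exact (h a has i hit).not_gt hia

def hits {k : ℕ} (y : Fin k → C00) (F : Finset ℕ) : Finset (Fin k) :=
  {i | ¬ Disjoint (y i).support F}

variable {k : ℕ} {y : Fin k → C00}

lemma hits_le_hits (hy : ∀ i j : Fin k, i < j → FinsetLT (y i).support (y j).support)
    {F F' : Finset ℕ} (hF : FinsetLT F F') {i i' : Fin k} (hi : i ∈ hits y F)
    (hi' : i' ∈ hits y F') : i ≤ i' := by
  obtain ⟨a, hay, haF⟩ := not_disjoint_iff.1 (mem_filter.1 hi).2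
  obtain ⟨b, hby, hbF⟩ := not_disjoint_iff.1 (mem_filter.1 hi').2
  by_contra! hlt
  exact (hy i' i hlt b hby a hay).not_gt (hF a haF b hbF)

lemma sum_card_nonMaximal_hits_le (hy : ∀ i j : Fin k, i < j → FinsetLT (y i).support (y j).support)
    {m : ℕ} {F : Fin m → Finset ℕ} (hF : ∀ i j : Fin m, i < j → FinsetLT (F i) (F j)) :
    ∑ j, (nonMaximal (hits y (F j))).card ≤ k := by
  have hdisj : ((univ : Finset (Fin m)) : Set (Fin m)).PairwiseDisjoint
      fun j => nonMaximal (hits y (F j)) := by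
    have hlt : ∀ j j', j < j' → Disjoint (nonMaximal (hits y (F j))) (nonMaximal (hits y (F j'))) :=
      fun j j' hjj' => (disjoint_nonMaximal_of_forall_le fun _ ha _ hb =>
        hits_le_hits hy (hF j j' hjj') ha hb).mono_right (nonMaximal_subset _)
    intro j _ j' _ hjj'
    rcases lt_or_gt_of_ne hjj' with h | h
    · exact hlt j j' h
    · exact (hlt j' j h).symm
  rw [← card_biUnion hdisj]
  simpa using card_le_univ (univ.biUnion fun j => nonMaximal (hits y (F j)))

end Blocks

lemma inv_card_mul_sum_rpow_le {ι : Type*} {s : Finset ι} (hs : s.Nonempty) {a : ι → ℝ}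
    (ha : ∀ i ∈ s, 0 ≤ a i) {q : ℝ} (hq0 : 0 ≤ q) (hq1 : q ≤ 1) :
    (s.card : ℝ)⁻¹ * ∑ i ∈ s, a i ^ q ≤ ((s.card : ℝ)⁻¹ * ∑ i ∈ s, a i) ^ q := by
  have hw : ∑ _i ∈ s, (s.card : ℝ)⁻¹ = 1 := by
    rw [sum_const, nsmul_eq_mul, mul_inv_cancel₀ (by exact_mod_cast hs.card_pos.ne')]
  simpa only [mul_sum, smul_eq_mul] using
    (Real.concaveOn_rpow hq0 hq1).le_map_sum (fun _ _ => by positivity) hw ha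

lemma rpow_neg_mul_div_rpow_le {a b q : ℝ} (ha : 0 ≤ a) (hb : 0 < b) (hq : 0 < q) :
    a ^ (-q) * (a / b) ^ q ≤ b ^ (-q) := by
  rcases ha.eq_or_lt with rfl | ha
  · simp [Real.zero_rpow hq.ne']
    positivity
  · rw [Real.div_rpow ha.le hb.le, Real.rpow_neg ha.le, Real.rpow_neg hb.le,
      div_eq_mul_inv, inv_mul_cancel_left₀ (Real.rpow_pos_of_pos ha q).ne']

section Average

variable {N : C00 → ℝ} {k : ℕ} {y : Fin k → C00} {q C : ℝ}

lemma norm_restr_average_le (hN : IsNorm N) (hmono : ∀ G z, N (restr G z) ≤ N z)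
    (hy1 : ∀ i, N (y i) ≤ 1)
    (hup : ∀ s : Finset (Fin k), N (∑ i ∈ s, y i) ≤ C * (s.card : ℝ) ^ q) (F : Finset ℕ) :
    N (restr F ((k : ℝ) ^ (-q) • ∑ i, y i)) ≤
      (k : ℝ) ^ (-q) * (C * ((nonMaximal (hits y F)).card : ℝ) ^ q + 1) := by
  set M := hits y F
  set A := nonMaximal M
  have hsplit : restr F (∑ i, y i) = restr F (∑ i ∈ A, y i) + ∑ i ∈ M \ A, restr F (y i) := by
    have hout : ∑ i, restr F (y i) = ∑ i ∈ M, restr F (y i) :=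
      (sum_subset (subset_univ M) fun i _ hi =>
        restr_eq_zero_of_disjoint (by simpa [M, hits] using hi)).symm
    rw [restr_sum, restr_sum, hout, ← sum_sdiff (nonMaximal_subset M), add_comm]
  have hk : 0 ≤ (k : ℝ) ^ (-q) := by positivity
  rw [restr_smul, hN.2.1, abs_of_nonneg hk, hsplit]
  gcongr
  calc N (restr F (∑ i ∈ A, y i) + ∑ i ∈ M \ A, restr F (y i))
      ≤ N (restr F (∑ i ∈ A, y i)) + ∑ i ∈ M \ A, N (restr F (y i)) :=
        (hN.1 _ _).trans (add_le_add_right (hN.sum_le _ _) _)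
    _ ≤ C * (A.card : ℝ) ^ q + ∑ _i ∈ M \ A, (1 : ℝ) :=
        add_le_add ((hmono _ _).trans (hup A))
          (sum_le_sum fun i _ => (hmono _ _).trans (hy1 i))
    _ ≤ C * (A.card : ℝ) ^ q + 1 := by
        have := card_sdiff_nonMaximal_le_one M
        simp only [sum_const, nsmul_eq_mul, mul_one]
        gcongr
        exact_mod_cast this

lemma sum_norm_restr_average_le (hN : IsNorm N) (hmono : ∀ G z, N (restr G z) ≤ N z)
    (hq0 : 0 < q) (hq1 : q ≤ 1) (hC : 0 ≤ C)
    (hy : ∀ i j : Fin k, i < j → FinsetLT (y i).support (y j).support) (hy1 : ∀ i, N (y i) ≤ 1)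
    (hup : ∀ s : Finset (Fin k), N (∑ i ∈ s, y i) ≤ C * (s.card : ℝ) ^ q)
    {m : ℕ} {F : Fin m → Finset ℕ} (hF : ∀ i j : Fin m, i < j → FinsetLT (F i) (F j)) :
    (1 / (m : ℝ)) * ∑ j, N (restr (F j) ((k : ℝ) ^ (-q) • ∑ i, y i)) ≤
      C * (m : ℝ) ^ (-q) + (k : ℝ) ^ (-q) := by
  rcases Nat.eq_zero_or_pos m with rfl | hm
  · simp only [Nat.cast_zero, div_zero, zero_mul]
    positivity
  set a : Fin m → ℝ := fun j => ((nonMaximal (hits y (F j))).card : ℝ)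
  have hsum : ∑ j, a j ≤ k := by
    simp only [a]
    exact_mod_cast sum_card_nonMaximal_hits_le hy hF
  have hmean : (1 / (m : ℝ)) * ∑ j, a j ^ q ≤ ((1 / (m : ℝ)) * ∑ j, a j) ^ q := by
    simpa using inv_card_mul_sum_rpow_le (s := univ) (univ_nonempty_iff.2 ⟨⟨0, hm⟩⟩)
      (fun j _ => Nat.cast_nonneg (nonMaximal (hits y (F j))).card) hq0.le hq1
  calc (1 / (m : ℝ)) * ∑ j, N (restr (F j) ((k : ℝ) ^ (-q) • ∑ i, y i))
      ≤ (1 / (m : ℝ)) * ∑ j, (k : ℝ) ^ (-q) * (C * a j ^ q + 1) := by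
        gcongr with j
        exact norm_restr_average_le hN hmono hy1 hup (F j)
    _ = C * ((k : ℝ) ^ (-q) * ((1 / (m : ℝ)) * ∑ j, a j ^ q)) + (k : ℝ) ^ (-q) := by
        rw [← mul_sum, sum_add_distrib, ← mul_sum, sum_const, card_univ, Fintype.card_fin,
          nsmul_eq_mul, mul_one]
        field_simp
    _ ≤ C * ((k : ℝ) ^ (-q) * ((1 / (m : ℝ)) * k) ^ q) + (k : ℝ) ^ (-q) := by
        gcongr
        exact hmean.trans (by gcongr)
    _ ≤ C * (m : ℝ) ^ (-q) + (k : ℝ) ^ (-q) := by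
        rw [one_div_mul_eq_div]
        gcongr
        exact rpow_neg_mul_div_rpow_le (Nat.cast_nonneg k) (by positivity) hq0

lemma tnorm_restr_average_le (hN : IsNorm N) (hmono : ∀ G z, N (restr G z) ≤ N z)
    (hq0 : 0 < q) (hq1 : q ≤ 1) (hC : 0 ≤ C)
    (hy : ∀ i j : Fin k, i < j → FinsetLT (y i).support (y j).support) (hy1 : ∀ i, N (y i) ≤ 1)
    (hup : ∀ s : Finset (Fin k), N (∑ i ∈ s, y i) ≤ C * (s.card : ℝ) ^ q) (m : ℕ)
    (G : Finset ℕ) :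
    tnorm N m (restr G ((k : ℝ) ^ (-q) • ∑ i, y i)) ≤ C * (m : ℝ) ^ (-q) + (k : ℝ) ^ (-q) := by
  refine tnorm_le (by positivity) fun F hF => ?_
  simp_rw [restr_restr]
  exact sum_norm_restr_average_le hN hmono hq0 hq1 hC hy hy1 hup
    fun i j hij => (hF i j hij).mono inter_subset_left inter_subset_left

end Average

lemma normL_le_of_tnorm_restr_le {N : C00 → ℝ} (hN : IsNorm N) {q A B : ℝ} (hq : 0 < q) (hA : 0 ≤ A)
    (hB : 0 ≤ B) {x : C00}
    (hx : ∀ (m : ℕ) (G : Finset ℕ), tnorm N m (restr G x) ≤ A * (m : ℝ) ^ (-q) + B) (ℓ : ℕ) :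
    normL N ℓ x ≤ (1 / f ℓ) * (A * (1 - (2 : ℝ) ^ (-q))⁻¹ + ℓ * B) := by
  have hγ : (2 : ℝ) ^ (-q) < 1 := Real.rpow_lt_one_of_one_lt_of_neg one_lt_two (by linarith)
  have hf : 0 ≤ 1 / f ℓ := one_div_nonneg.2 (f_natCast_nonneg ℓ)
  have hbound : 0 ≤ A * (1 - (2 : ℝ) ^ (-q))⁻¹ + ℓ * B := by
    have : 0 < 1 - (2 : ℝ) ^ (-q) := by linarith
    positivity
  refine Real.sSup_le ?_ (mul_nonneg hf hbound)
  rintro _ ⟨m, E, h, rfl⟩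
  gcongr
  set S : Finset (Fin ℓ) := {i | (E i).Nonempty}
  calc ∑ i, tnorm N (m i) (restr (E i) x) = ∑ i ∈ S, tnorm N (m i) (restr (E i) x) := by
        refine (sum_subset (subset_univ S) fun i _ hi => ?_).symm
        have hE : E i = ∅ := not_nonempty_iff_eq_empty.1 (by simpa [S] using hi)
        rw [hE, restr_empty, tnorm_zero hN]
    _ ≤ ∑ i ∈ S, (A * (m i : ℝ) ^ (-q) + B) := sum_le_sum fun i _ => hx _ _
    _ = A * ∑ i ∈ S, (m i : ℝ) ^ (-q) + S.card * B := by
        rw [sum_add_distrib, mul_sum, sum_const, nsmul_eq_mul]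
    _ ≤ A * (1 - (2 : ℝ) ^ (-q))⁻¹ + ℓ * B := by
        gcongr
        · exact h.sum_rpow_neg_le hq fun i hi => (mem_filter.1 hi).2
        · simpa using card_le_univ S

lemma norm_sum_le_of_upper_estimate {N : C00 → ℝ} {k : ℕ} {y : Fin k → C00} {p C : ℝ}
    (hp : 0 < p) (hup : ∀ a : Fin k → ℝ, N (∑ i, a i • y i) ≤ C * (∑ i, |a i| ^ p) ^ (1 / p))
    (s : Finset (Fin k)) : N (∑ i ∈ s, y i) ≤ C * (s.card : ℝ) ^ (1 / p) := by
  have hvec : ∑ i, (if i ∈ s then (1 : ℝ) else 0) • y i = ∑ i ∈ s, y i := by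
    simp only [ite_smul, one_smul, zero_smul, sum_ite_mem, univ_inter]
  have hcoef : ∑ i, |if i ∈ s then (1 : ℝ) else 0| ^ p = s.card := by
    simp [apply_ite, Real.zero_rpow hp.ne']
  simpa only [hvec, hcoef] using hup fun i => if i ∈ s then 1 else 0

/-- Step 2. -/
theorem statement13 (N : C00 → ℝ) (hN : IsNorm N) (hEq : Eq22 N)
    (p : ℝ) (hp : 1 ≤ p) (k m ℓ : ℕ) (x : C00) (hx : IsLpAverage N p k 2 x) :
    tnorm N m x ≤ 4 * (m : ℝ) ^ (-(1 / p)) + (k : ℝ) ^ (-(1 / p)) ∧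
    normL N ℓ x ≤ (1 / f ℓ) * (Cp p + 2 * ℓ * (k : ℝ) ^ (-(1 / p))) := by
  obtain ⟨y, hy, hy1, hest, rfl⟩ := hx
  have hq0 : 0 < 1 / p := by positivity
  have hq1 : 1 / p ≤ 1 := (div_le_one (by positivity)).2 hp
  have htnorm := tnorm_restr_average_le hN (hEq.norm_restr_le hN) hq0 hq1 zero_le_two hy.2
    (fun i => (hy1 i).le) (norm_sum_le_of_upper_estimate (by positivity) fun a => (hest a).2)
  have hm : 0 ≤ (m : ℝ) ^ (-(1 / p)) := by positivity
  have hk : 0 ≤ (ℓ : ℝ) * (k : ℝ) ^ (-(1 / p)) := by positivity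
  have hgeom : 0 ≤ (1 - (2 : ℝ) ^ (-(1 / p)))⁻¹ := by
    have := Real.rpow_lt_one_of_one_lt_of_neg one_lt_two (neg_neg_of_pos hq0)
    exact inv_nonneg.2 (by linarith)
  constructor
  · have := htnorm m (((k : ℝ) ^ (-(1 / p))) • ∑ i, y i).support
    rw [restr_eq_self subset_rfl] at this
    linarith
  · refine (normL_le_of_tnorm_restr_le hN hq0 zero_le_two (by positivity) htnorm ℓ).trans ?_
    gcongr ?_ * ?_
    · exact one_div_nonneg.2 (f_natCast_nonneg ℓ)
    · rw [Cp]
      linarith
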